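/- arXiv:quant-ph/0008047 — 3 statements merged into one kernel-verified Lean document; each statement's English description precedes it below -/
import Mathlib

section
/- Maximally entangled states cannot catalyze p.p.t. distillation fidelity: for all integers d ≥ 1, all real K > 0, and any state ρ on a bipartite system, F_Γ(ρ ⊗ Φ(d); dK) = F_Γ(ρ; K), where ρ ⊗ Φ(d) is regarded as a state on the bipartite system grouping the two first factors against the two second factors. -/
open Matrix Filter
open scoped ComplexOrder
open scoped Kronecker

noncomputable section
set_option linter.unusedSectionVars false
set_option maxHeartbeats 1000000

/-- Partial transpose on the second tensor factor:
`ptrans M ((i,j),(k,l)) = M ((i,l),(k,j))`. -/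
def ptrans {ι κ : Type*} (M : Matrix (ι × κ) (ι × κ) ℂ) : Matrix (ι × κ) (ι × κ) ℂ :=
  fun x y => M (x.1, y.2) (y.1, x.2)

/-- Fidelity of `K`-state p.p.t. distillation:
the supremum of `Tr(Fρ)` over Hermitian `F` with `0 ≤ F ≤ 1` and `-1/K ≤ F^Γ ≤ 1/K`. -/
def FGamma {ι κ : Type*} [Fintype ι] [Fintype κ] [DecidableEq ι] [DecidableEq κ]
    (ρ : Matrix (ι × κ) (ι × κ) ℂ) (K : ℝ) : ℝ :=
  sSup {x : ℝ | ∃ F : Matrix (ι × κ) (ι × κ) ℂ,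
    F.PosSemidef ∧ (1 - F).PosSemidef ∧
    (((1 / K : ℝ) : ℂ) • 1 - ptrans F).PosSemidef ∧
    (ptrans F + ((1 / K : ℝ) : ℂ) • 1).PosSemidef ∧
    x = ((F * ρ).trace).re}

/-- The maximally entangled state `Φ(d) = (1/d) ∑ |ii⟩⟨jj|`. -/
def maxEnt (d : ℕ) : Matrix (Fin d × Fin d) (Fin d × Fin d) ℂ :=
  fun x y => if x.1 = x.2 ∧ y.1 = y.2 then (1 / (d : ℂ)) else 0

/-- Tensor product of two bipartite matrices, regrouped as a bipartite matrix
(first factors against second factors). -/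
def tensorBip {ι₁ κ₁ ι₂ κ₂ : Type*}
    (ρ₁ : Matrix (ι₁ × κ₁) (ι₁ × κ₁) ℂ) (ρ₂ : Matrix (ι₂ × κ₂) (ι₂ × κ₂) ℂ) :
    Matrix ((ι₁ × ι₂) × (κ₁ × κ₂)) ((ι₁ × ι₂) × (κ₁ × κ₂)) ℂ :=
  fun x y => ρ₁ (x.1.1, x.2.1) (y.1.1, y.2.1) * ρ₂ (x.1.2, x.2.2) (y.1.2, y.2.2)

/-! ### Generic positive semidefiniteness helpers -/

lemma posSemidef_of_proj {n : Type*} [Fintype n] {M : Matrix n n ℂ}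
    (h : M.IsHermitian) (h2 : M * M = M) : M.PosSemidef := by
  have : M = Mᴴ * M := by rw [h.eq, h2]
  rw [this]; exact posSemidef_conjTranspose_mul_self _

lemma smul_posSemidef {n : Type*} [Fintype n] {M : Matrix n n ℂ} (hM : M.PosSemidef)
    {r : ℝ} (hr : 0 ≤ r) : (((r : ℂ)) • M).PosSemidef := by
  constructor
  · have := hM.isHermitian
    unfold Matrix.IsHermitian at *
    rw [conjTranspose_smul, this]
    simp [Complex.star_def, Complex.conj_ofReal]
  · exact (hM.smul (a := (r:ℂ)) (Complex.zero_le_real.2 hr)).2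

lemma posSemidef_sum {n : Type*} [Fintype n] {ι : Type*} (s : Finset ι)
    (f : ι → Matrix n n ℂ) (hf : ∀ i ∈ s, (f i).PosSemidef) :
    (∑ i ∈ s, f i).PosSemidef := by
  classical
  induction s using Finset.induction with
  | empty => simpa using Matrix.PosSemidef.zero
  | insert _ _ h ih =>
    rw [Finset.sum_insert h]
    exact Matrix.PosSemidef.add (hf _ (Finset.mem_insert_self _ _))
      (ih fun i hi => hf i (Finset.mem_insert_of_mem hi))

lemma isHermitian_real_smul {n : Type*} {M : Matrix n n ℂ} (h : M.IsHermitian) (r : ℝ) :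
    (((r:ℂ)) • M).IsHermitian := by
  unfold Matrix.IsHermitian at *
  rw [conjTranspose_smul, h, Complex.star_def, Complex.conj_ofReal]

open scoped MatrixOrder in
lemma psd_eq_star_mul_self {n : Type*} [Fintype n] [DecidableEq n] {A : Matrix n n ℂ}
    (hA : A.PosSemidef) : ∃ Q : Matrix n n ℂ, A = Qᴴ * Q := by
  obtain ⟨a, rfl⟩ := CStarAlgebra.nonneg_iff_eq_star_mul_self.mp hA.nonneg
  exact ⟨a, rfl⟩

/-! ### Basic properties of `tensorBip` -/

section TensorBip

variable {ι₁ κ₁ ι₂ κ₂ : Type*} [Fintype ι₁] [Fintype κ₁] [Fintype ι₂] [Fintype κ₂]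
  [DecidableEq ι₁] [DecidableEq κ₁] [DecidableEq ι₂] [DecidableEq κ₂]

lemma tensorBip_eq (A : Matrix (ι₁ × κ₁) (ι₁ × κ₁) ℂ) (B : Matrix (ι₂ × κ₂) (ι₂ × κ₂) ℂ) :
    tensorBip A B = (A ⊗ₖ B).submatrix (Equiv.prodProdProdComm ι₁ ι₂ κ₁ κ₂)
      (Equiv.prodProdProdComm ι₁ ι₂ κ₁ κ₂) := rfl

lemma tensorBip_mul (A C : Matrix (ι₁ × κ₁) (ι₁ × κ₁) ℂ) (B D : Matrix (ι₂ × κ₂) (ι₂ × κ₂) ℂ) :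
    tensorBip A B * tensorBip C D = tensorBip (A * C) (B * D) := by
  simp only [tensorBip_eq, submatrix_mul_equiv, mul_kronecker_mul]

lemma tensorBip_one :
    tensorBip (1 : Matrix (ι₁ × κ₁) (ι₁ × κ₁) ℂ) (1 : Matrix (ι₂ × κ₂) (ι₂ × κ₂) ℂ) = 1 := by
  simp only [tensorBip_eq, one_kronecker_one, submatrix_one_equiv]

lemma tensorBip_conjTranspose (A : Matrix (ι₁ × κ₁) (ι₁ × κ₁) ℂ) (B : Matrix (ι₂ × κ₂) (ι₂ × κ₂) ℂ) :
    (tensorBip A B)ᴴ = tensorBip Aᴴ Bᴴ := by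
  ext x y
  simp [tensorBip, conjTranspose_apply, star_mul']

lemma tensorBip_trace (A : Matrix (ι₁ × κ₁) (ι₁ × κ₁) ℂ) (B : Matrix (ι₂ × κ₂) (ι₂ × κ₂) ℂ) :
    (tensorBip A B).trace = A.trace * B.trace := by
  rw [tensorBip_eq, ← trace_kronecker A B]
  simp only [Matrix.trace, Matrix.diag, submatrix_apply]
  exact Equiv.sum_comp (Equiv.prodProdProdComm ι₁ ι₂ κ₁ κ₂) (fun p => (A ⊗ₖ B) p p)

lemma tensorBip_posSemidef {A : Matrix (ι₁ × κ₁) (ι₁ × κ₁) ℂ} {B : Matrix (ι₂ × κ₂) (ι₂ × κ₂) ℂ}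
    (hA : A.PosSemidef) (hB : B.PosSemidef) : (tensorBip A B).PosSemidef := by
  rw [tensorBip_eq]
  exact (hA.kronecker hB).submatrix _

lemma tensorBip_sub_left (A B : Matrix (ι₁ × κ₁) (ι₁ × κ₁) ℂ) (C : Matrix (ι₂ × κ₂) (ι₂ × κ₂) ℂ) :
    tensorBip (A - B) C = tensorBip A C - tensorBip B C := by
  ext x y; simp [tensorBip, sub_mul]

lemma tensorBip_add_left (A B : Matrix (ι₁ × κ₁) (ι₁ × κ₁) ℂ) (C : Matrix (ι₂ × κ₂) (ι₂ × κ₂) ℂ) :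
    tensorBip (A + B) C = tensorBip A C + tensorBip B C := by
  ext x y; simp [tensorBip, add_mul]

lemma tensorBip_sub_right (A : Matrix (ι₁ × κ₁) (ι₁ × κ₁) ℂ) (B C : Matrix (ι₂ × κ₂) (ι₂ × κ₂) ℂ) :
    tensorBip A (B - C) = tensorBip A B - tensorBip A C := by
  ext x y; simp [tensorBip, mul_sub]

lemma tensorBip_add_right (A : Matrix (ι₁ × κ₁) (ι₁ × κ₁) ℂ) (B C : Matrix (ι₂ × κ₂) (ι₂ × κ₂) ℂ) :
    tensorBip A (B + C) = tensorBip A B + tensorBip A C := by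
  ext x y; simp [tensorBip, mul_add]

lemma tensorBip_smul_left (c : ℂ) (A : Matrix (ι₁ × κ₁) (ι₁ × κ₁) ℂ)
    (B : Matrix (ι₂ × κ₂) (ι₂ × κ₂) ℂ) :
    tensorBip (c • A) B = c • tensorBip A B := by
  ext x y; simp [tensorBip]; ring

lemma tensorBip_smul_right (c : ℂ) (A : Matrix (ι₁ × κ₁) (ι₁ × κ₁) ℂ)
    (B : Matrix (ι₂ × κ₂) (ι₂ × κ₂) ℂ) :
    tensorBip A (c • B) = c • tensorBip A B := by
  ext x y; simp [tensorBip]; ring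

lemma ptrans_tensorBip (A : Matrix (ι₁ × κ₁) (ι₁ × κ₁) ℂ) (B : Matrix (ι₂ × κ₂) (ι₂ × κ₂) ℂ) :
    ptrans (tensorBip A B) = tensorBip (ptrans A) (ptrans B) := rfl

lemma ptrans_smul (c : ℂ) (A : Matrix (ι₁ × κ₁) (ι₁ × κ₁) ℂ) :
    ptrans (c • A) = c • ptrans A := rfl

end TensorBip

/-! ### The maximally entangled state and the swap matrix -/

/-- The swap matrix on `ℂ^d ⊗ ℂ^d`. -/
def swapM (d : ℕ) : Matrix (Fin d × Fin d) (Fin d × Fin d) ℂ :=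
  fun x y => if x.1 = y.2 ∧ x.2 = y.1 then 1 else 0

variable {d : ℕ}

lemma maxEnt_mul_self (hd : 1 ≤ d) : maxEnt d * maxEnt d = maxEnt d := by
  ext x y
  rw [Matrix.mul_apply]
  simp only [maxEnt, Fintype.sum_prod_type, ite_mul, zero_mul, mul_ite, mul_zero]
  by_cases hx : x.1 = x.2 <;> by_cases hy : y.1 = y.2 <;>
    simp [hx, hy, Finset.sum_ite_eq, div_mul_div_comm]
  · have hd0 : (d : ℂ) ≠ 0 := Nat.cast_ne_zero.2 (by omega)
    field_simp

lemma maxEnt_isHermitian : (maxEnt d).IsHermitian := by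
  ext x y
  simp only [maxEnt, conjTranspose_apply]
  by_cases h : y.1 = y.2 <;> by_cases h' : x.1 = x.2 <;>
    simp [h, h', Complex.star_def, ← Complex.ofReal_natCast]

lemma maxEnt_posSemidef (hd : 1 ≤ d) : (maxEnt d).PosSemidef :=
  posSemidef_of_proj maxEnt_isHermitian (maxEnt_mul_self hd)

lemma maxEnt_trace (hd : 1 ≤ d) : (maxEnt d).trace = 1 := by
  have hd0 : (d : ℂ) ≠ 0 := Nat.cast_ne_zero.2 (by omega)
  simp only [Matrix.trace, Matrix.diag, maxEnt, Fintype.sum_prod_type]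
  simp [Finset.sum_ite_eq, Finset.sum_const, Finset.card_univ, hd0]

lemma one_sub_maxEnt_posSemidef (hd : 1 ≤ d) : (1 - maxEnt d).PosSemidef := by
  refine posSemidef_of_proj (Matrix.IsHermitian.sub Matrix.isHermitian_one maxEnt_isHermitian) ?_
  simp only [sub_mul, mul_sub, one_mul, mul_one, maxEnt_mul_self hd]
  abel

lemma swapM_isHermitian : (swapM d).IsHermitian := by
  ext x y
  simp only [swapM, conjTranspose_apply]
  by_cases h : x.1 = y.2 ∧ x.2 = y.1
  · rw [if_pos ⟨h.2.symm, h.1.symm⟩, if_pos h]; simp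
  · rw [if_neg (fun hh => h ⟨hh.2.symm, hh.1.symm⟩), if_neg h]; simp

lemma swapM_mul_self : swapM d * swapM d = 1 := by
  ext x y
  rw [Matrix.mul_apply]
  rw [Finset.sum_eq_single (x.2, x.1)]
  · simp only [swapM, Matrix.one_apply]
    by_cases h1 : x.2 = y.2 <;> by_cases h2 : x.1 = y.1 <;>
      simp [h1, h2, Prod.ext_iff]
  · intro z _ hz
    simp only [swapM, ite_mul, one_mul, zero_mul]
    rw [if_neg (fun hh => hz (Prod.ext hh.2.symm hh.1.symm))]
  · simp

lemma ptrans_maxEnt (hd : 1 ≤ d) : ptrans (maxEnt d) = ((1 / (d:ℝ) : ℝ) : ℂ) • swapM d := by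
  ext x y
  simp only [ptrans, maxEnt, swapM, Matrix.smul_apply, smul_eq_mul]
  by_cases h1 : x.1 = y.2 <;> by_cases h2 : y.1 = x.2 <;>
    simp [h1, h2, eq_comm]

/-- Symmetric projector `(1 + S)/2`. -/
def projP (d : ℕ) : Matrix (Fin d × Fin d) (Fin d × Fin d) ℂ := (1/2 : ℂ) • (1 + swapM d)
/-- Antisymmetric projector `(1 - S)/2`. -/
def projM (d : ℕ) : Matrix (Fin d × Fin d) (Fin d × Fin d) ℂ := (1/2 : ℂ) • (1 - swapM d)

lemma projP_add_projM : projP d + projM d = 1 := by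
  unfold projP projM
  rw [← smul_add]
  have : (1 + swapM d) + (1 - swapM d) = (2:ℂ) • 1 := by
    simp only [two_smul]; abel
  rw [this, smul_smul]
  norm_num

lemma projP_sub_projM : projP d - projM d = swapM d := by
  unfold projP projM
  rw [← smul_sub]
  have : (1 + swapM d) - (1 - swapM d) = (2:ℂ) • swapM d := by
    simp only [two_smul]; abel
  rw [this, smul_smul]
  norm_num

lemma projP_posSemidef : (projP d).PosSemidef := by
  refine posSemidef_of_proj ?_ ?_
  · have : ((1:ℂ)/2) = (((1/2 : ℝ):ℂ)) := by norm_num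
    rw [projP, this]
    exact isHermitian_real_smul (Matrix.isHermitian_one.add swapM_isHermitian) _
  · have h1 : (1 + swapM d) * (1 + swapM d) = (2:ℂ) • (1 + swapM d) := by
      simp only [add_mul, mul_add, one_mul, mul_one, swapM_mul_self, two_smul]
      abel
    rw [projP, Matrix.smul_mul, Matrix.mul_smul, h1, smul_smul, smul_smul]
    norm_num

lemma projM_posSemidef : (projM d).PosSemidef := by
  refine posSemidef_of_proj ?_ ?_
  · have : ((1:ℂ)/2) = (((1/2 : ℝ):ℂ)) := by norm_num
    rw [projM, this]
    exact isHermitian_real_smul (Matrix.isHermitian_one.sub swapM_isHermitian) _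
  · have h1 : (1 - swapM d) * (1 - swapM d) = (2:ℂ) • (1 - swapM d) := by
      simp only [sub_mul, mul_sub, one_mul, mul_one, swapM_mul_self, two_smul]
      abel
    rw [projM, Matrix.smul_mul, Matrix.mul_smul, h1, smul_smul, smul_smul]
    norm_num

/-! ### The compression map -/

/-- Compression of a matrix on `(α⊗δ) ⊗ (β⊗δ)` against a "state" `P` on `δ⊗δ`. -/
def compress {α β δ : Type*} [Fintype δ] (P : Matrix (δ × δ) (δ × δ) ℂ)
    (X : Matrix ((α × δ) × (β × δ)) ((α × δ) × (β × δ)) ℂ) : Matrix (α × β) (α × β) ℂ :=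
  fun p q => ∑ v : δ × δ, ∑ v' : δ × δ,
    X ((p.1, v.1), (p.2, v.2)) ((q.1, v'.1), (q.2, v'.2)) * P v' v

section Compress

variable {α β δ : Type*} [Fintype α] [Fintype β] [Fintype δ]
    [DecidableEq α] [DecidableEq β] [DecidableEq δ]

lemma sumCollapse (h : (α × δ) × (β × δ) → ℂ) (q : α × β) :
    ∑ s : (α × δ) × (β × δ), (if s.1.1 = q.1 ∧ s.2.1 = q.2 then h s else 0)
      = ∑ v : δ × δ, h ((q.1, v.1), (q.2, v.2)) := by
  rw [← Equiv.sum_comp (Equiv.prodProdProdComm α β δ δ)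
    (fun s => if s.1.1 = q.1 ∧ s.2.1 = q.2 then h s else 0)]
  rw [Fintype.sum_prod_type]
  rw [Finset.sum_eq_single q]
  · simp [Equiv.prodProdProdComm]
  · intro u _ hu
    have hc : ¬(u.1 = q.1 ∧ u.2 = q.2) := fun hc => hu (Prod.ext hc.1 hc.2)
    simp [Equiv.prodProdProdComm, hc]
  · simp

lemma compress_posSemidef {P : Matrix (δ × δ) (δ × δ) ℂ}
    {X : Matrix ((α × δ) × (β × δ)) ((α × δ) × (β × δ)) ℂ}
    (hP : P.PosSemidef) (hX : X.PosSemidef) : (compress P X).PosSemidef := by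
  obtain ⟨Q, hQP⟩ := psd_eq_star_mul_self hP
  set A : (δ × δ) → Matrix ((α × δ) × (β × δ)) (α × β) ℂ :=
    fun w r s => (if r.1.1 = s.1 ∧ r.2.1 = s.2 then 1 else 0) * star (Q w (r.1.2, r.2.2))
    with hAdef
  have key : compress P X = ∑ w : δ × δ, (A w)ᴴ * X * (A w) := by
    ext p q
    rw [Matrix.sum_apply]
    have hterm : ∀ w : δ × δ, ((A w)ᴴ * X * (A w)) p q
        = ∑ v : δ × δ, ∑ v' : δ × δ,
          Q w v * X ((p.1, v.1), (p.2, v.2)) ((q.1, v'.1), (q.2, v'.2)) * star (Q w v') := by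
      intro w
      simp only [Matrix.mul_apply, Matrix.conjTranspose_apply]
      simp only [hAdef, Matrix.mul_apply, Matrix.conjTranspose_apply, star_mul', star_star,
        apply_ite star, star_one, star_zero, ite_mul, one_mul, zero_mul, mul_ite, mul_zero]
      rw [sumCollapse (fun s => (∑ r : (α × δ) × (β × δ),
        if r.1.1 = p.1 ∧ r.2.1 = p.2 then Q w (r.1.2, r.2.2) * X r s else 0)
          * star (Q w (s.1.2, s.2.2))) q]
      have hin : ∀ v' : δ × δ, (∑ r : (α × δ) × (β × δ),
          if r.1.1 = p.1 ∧ r.2.1 = p.2 then Q w (r.1.2, r.2.2) * X r ((q.1, v'.1), (q.2, v'.2)) else 0)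
          = ∑ v : δ × δ, Q w v * X ((p.1, v.1), (p.2, v.2)) ((q.1, v'.1), (q.2, v'.2)) :=
        fun v' => sumCollapse (fun r => Q w (r.1.2, r.2.2) * X r ((q.1, v'.1), (q.2, v'.2))) p
      simp only [hin, Finset.sum_mul]
      rw [Finset.sum_comm]
    simp only [hterm]
    have swap3 : ∀ f : (δ × δ) → (δ × δ) → (δ × δ) → ℂ,
        (∑ w : δ × δ, ∑ v : δ × δ, ∑ v' : δ × δ, f w v v')
          = ∑ v : δ × δ, ∑ v' : δ × δ, ∑ w : δ × δ, f w v v' := by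
      intro f
      rw [Finset.sum_comm]
      exact Finset.sum_congr rfl fun v _ => Finset.sum_comm
    rw [swap3]
    refine Finset.sum_congr rfl fun v _ => Finset.sum_congr rfl fun v' _ => ?_
    have hQ : ∑ w : δ × δ, star (Q w v') * Q w v = P v' v := by
      calc ∑ w : δ × δ, star (Q w v') * Q w v = (Qᴴ * Q) v' v := by
            rw [Matrix.mul_apply]; exact Finset.sum_congr rfl fun w _ => by rw [conjTranspose_apply]
        _ = P v' v := by rw [hQP]
    calc X ((p.1, v.1), (p.2, v.2)) ((q.1, v'.1), (q.2, v'.2)) * P v' v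
        = X ((p.1, v.1), (p.2, v.2)) ((q.1, v'.1), (q.2, v'.2)) * ∑ w : δ × δ, star (Q w v') * Q w v := by
          rw [hQ]
      _ = ∑ w : δ × δ, Q w v * X ((p.1, v.1), (p.2, v.2)) ((q.1, v'.1), (q.2, v'.2)) * star (Q w v') := by
          rw [Finset.mul_sum]
          exact Finset.sum_congr rfl fun w _ => by ring
  rw [key]
  exact posSemidef_sum _ _ fun w _ => hX.conjTranspose_mul_mul_same (A w)

lemma compress_sub_right (P : Matrix (δ × δ) (δ × δ) ℂ)
    (X Y : Matrix ((α × δ) × (β × δ)) ((α × δ) × (β × δ)) ℂ) :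
    compress P (X - Y) = compress P X - compress P Y := by
  ext p q; simp [compress, sub_mul, Finset.sum_sub_distrib]

lemma compress_add_right (P : Matrix (δ × δ) (δ × δ) ℂ)
    (X Y : Matrix ((α × δ) × (β × δ)) ((α × δ) × (β × δ)) ℂ) :
    compress P (X + Y) = compress P X + compress P Y := by
  ext p q; simp [compress, add_mul, Finset.sum_add_distrib]

lemma compress_smul_right (P : Matrix (δ × δ) (δ × δ) ℂ) (c : ℂ)
    (X : Matrix ((α × δ) × (β × δ)) ((α × δ) × (β × δ)) ℂ) :
    compress P (c • X) = c • compress P X := by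
  ext p q; simp [compress, Finset.mul_sum, mul_assoc]

lemma compress_sub_left (P Q : Matrix (δ × δ) (δ × δ) ℂ)
    (X : Matrix ((α × δ) × (β × δ)) ((α × δ) × (β × δ)) ℂ) :
    compress (P - Q) X = compress P X - compress Q X := by
  ext p q; simp [compress, mul_sub, Finset.sum_sub_distrib]

lemma compress_add_left (P Q : Matrix (δ × δ) (δ × δ) ℂ)
    (X : Matrix ((α × δ) × (β × δ)) ((α × δ) × (β × δ)) ℂ) :
    compress (P + Q) X = compress P X + compress Q X := by
  ext p q; simp [compress, mul_add, Finset.sum_add_distrib]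

lemma compress_one (P : Matrix (δ × δ) (δ × δ) ℂ) :
    compress P (1 : Matrix ((α × δ) × (β × δ)) ((α × δ) × (β × δ)) ℂ)
      = P.trace • (1 : Matrix (α × β) (α × β) ℂ) := by
  ext p q
  simp only [compress, Matrix.one_apply, Matrix.smul_apply, smul_eq_mul, Prod.mk.injEq,
    ite_mul, one_mul, zero_mul]
  by_cases h : p = q
  · subst h
    simp only [true_and, and_true]
    have hiff : ∀ v v' : δ × δ, ((v.1 = v'.1) ∧ (v.2 = v'.2)) ↔ v = v' :=
      fun v v' => (Prod.ext_iff).symm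
    simp only [hiff]
    simp [Finset.sum_ite_eq, Matrix.trace, Matrix.diag]
  · have hor : ¬(p.1 = q.1) ∨ ¬(p.2 = q.2) := by
      by_contra hc; push_neg at hc; exact h (Prod.ext hc.1 hc.2)
    rw [if_neg h, mul_zero]
    rcases hor with h1 | h1 <;>
      refine Finset.sum_eq_zero fun v _ => Finset.sum_eq_zero fun v' _ => ?_ <;>
      simp [h1]

end Compress

/-! ### diagE, lift, and glue lemmas -/

/-- The unnormalized maximally-entangled projector `d·Φ(d)`, generalized. -/
def diagE (δ : Type*) [DecidableEq δ] : Matrix (δ × δ) (δ × δ) ℂ :=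
  fun v' v => if v'.1 = v'.2 ∧ v.1 = v.2 then 1 else 0

/-- `ρ ⊗ (d·Φ(d))` entrywise. -/
def liftTo {α β δ : Type*} [DecidableEq δ] (ρ : Matrix (α × β) (α × β) ℂ) :
    Matrix ((α × δ) × (β × δ)) ((α × δ) × (β × δ)) ℂ :=
  fun r s => if r.1.2 = r.2.2 ∧ s.1.2 = s.2.2 then ρ (r.1.1, r.2.1) (s.1.1, s.2.1) else 0

section Glue

variable {α β δ : Type*} [Fintype α] [Fintype β] [Fintype δ]
    [DecidableEq α] [DecidableEq β] [DecidableEq δ]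

lemma diagE_posSemidef : (diagE δ).PosSemidef := by
  have h : diagE δ = (Matrix.of (fun (_ : Unit) (v : δ × δ) => if v.1 = v.2 then (1:ℂ) else 0))ᴴ
      * (Matrix.of (fun (_ : Unit) (v : δ × δ) => if v.1 = v.2 then (1:ℂ) else 0)) := by
    ext v' v
    rw [Matrix.mul_apply]
    simp only [conjTranspose_apply, Matrix.of_apply, Finset.univ_unique, Finset.sum_singleton]
    by_cases h1 : v'.1 = v'.2 <;> by_cases h2 : v.1 = v.2 <;> simp [diagE, h1, h2]
  rw [h]
  exact posSemidef_conjTranspose_mul_self _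

lemma diagE_trace : (diagE δ).trace = (Fintype.card δ : ℂ) := by
  simp only [Matrix.trace, Matrix.diag, diagE, and_self, Fintype.sum_prod_type]
  simp [Finset.sum_ite_eq, Finset.card_univ]

lemma diagCollapse (g : δ × δ → ℂ) :
    ∑ v : δ × δ, (if v.1 = v.2 then g v else 0) = ∑ m : δ, g (m, m) := by
  rw [Fintype.sum_prod_type]
  simp [Finset.sum_ite_eq]

lemma ptrans_compress_diagE {d : ℕ}
    (X : Matrix ((α × Fin d) × (β × Fin d)) ((α × Fin d) × (β × Fin d)) ℂ) :
    ptrans (compress (diagE (Fin d)) X) = compress (swapM d) (ptrans X) := by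
  ext p q
  show compress (diagE (Fin d)) X (p.1, q.2) (q.1, p.2) = compress (swapM d) (ptrans X) p q
  unfold compress
  have hR : ∀ v : Fin d × Fin d,
      (∑ v' : Fin d × Fin d,
        ptrans X ((p.1, v.1), (p.2, v.2)) ((q.1, v'.1), (q.2, v'.2)) * swapM d v' v)
      = X ((p.1, v.1), (q.2, v.1)) ((q.1, v.2), (p.2, v.2)) := by
    intro v
    rw [Finset.sum_eq_single (v.2, v.1)]
    · simp [swapM, ptrans]
    · intro z _ hz
      have : ¬(z.1 = v.2 ∧ z.2 = v.1) := fun hh => hz (Prod.ext hh.1 hh.2)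
      simp [swapM, this]
    · simp
  have hL : ∀ v : Fin d × Fin d,
      (∑ v' : Fin d × Fin d,
        X ((p.1, v.1), (q.2, v.2)) ((q.1, v'.1), (p.2, v'.2)) * diagE (Fin d) v' v)
      = if v.1 = v.2 then ∑ n : Fin d, X ((p.1, v.1), (q.2, v.2)) ((q.1, n), (p.2, n)) else 0 := by
    intro v
    by_cases hv : v.1 = v.2
    · rw [if_pos hv]
      have : ∀ v' : Fin d × Fin d,
          X ((p.1, v.1), (q.2, v.2)) ((q.1, v'.1), (p.2, v'.2)) * diagE (Fin d) v' v
          = if v'.1 = v'.2 then X ((p.1, v.1), (q.2, v.2)) ((q.1, v'.1), (p.2, v'.2)) else 0 := by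
        intro v'
        by_cases h' : v'.1 = v'.2 <;> simp [diagE, hv, h']
      simp only [this]
      exact diagCollapse (fun v' => X ((p.1, v.1), (q.2, v.2)) ((q.1, v'.1), (p.2, v'.2)))
    · rw [if_neg hv]
      refine Finset.sum_eq_zero fun v' _ => ?_
      simp [diagE, hv]
  simp only [hR, hL]
  rw [diagCollapse (fun v => ∑ n : Fin d, X ((p.1, v.1), (q.2, v.2)) ((q.1, n), (p.2, n)))]
  rw [Fintype.sum_prod_type]

lemma trace_compress_mul (X : Matrix ((α × δ) × (β × δ)) ((α × δ) × (β × δ)) ℂ)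
    (ρ : Matrix (α × β) (α × β) ℂ) :
    ((compress (diagE δ) X) * ρ).trace = (X * liftTo ρ).trace := by
  rw [Matrix.trace, Matrix.trace]
  simp only [Matrix.diag, Matrix.mul_apply, compress]
  rw [← Equiv.sum_comp (Equiv.prodProdProdComm α β δ δ)
    (fun r => ∑ s, X r s * liftTo ρ s r)]
  conv_rhs => rw [Fintype.sum_prod_type]
  refine Finset.sum_congr rfl fun p _ => ?_
  -- LHS : ∑ q, (∑ v, ∑ v', X .. * diagE v' v) * ρ q p
  -- RHS : ∑ v, ∑ s, X (e (p,v)) s * liftTo ρ s (e (p,v))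
  have hRHS : ∀ v : δ × δ,
      (∑ s, X ((p.1, v.1), (p.2, v.2)) s * liftTo ρ s ((p.1, v.1), (p.2, v.2)))
      = ∑ q : α × β, ∑ v' : δ × δ, X ((p.1, v.1), (p.2, v.2)) ((q.1, v'.1), (q.2, v'.2))
          * (if v'.1 = v'.2 ∧ v.1 = v.2 then ρ q p else 0) := by
    intro v
    rw [← Equiv.sum_comp (Equiv.prodProdProdComm α β δ δ)
      (fun s => X ((p.1, v.1), (p.2, v.2)) s * liftTo ρ s ((p.1, v.1), (p.2, v.2)))]
    rw [Fintype.sum_prod_type]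
    rfl
  simp only [Equiv.prodProdProdComm, Equiv.coe_fn_mk]
  simp only [hRHS]
  rw [Finset.sum_comm]
  refine Finset.sum_congr rfl fun q _ => ?_
  rw [Finset.sum_mul]
  refine Finset.sum_congr rfl fun v _ => ?_
  rw [Finset.sum_mul]
  refine Finset.sum_congr rfl fun v' _ => ?_
  simp only [diagE, mul_ite, ite_mul, mul_one, mul_zero, zero_mul]

lemma tensorBip_maxEnt_lift {d : ℕ} (hd : 1 ≤ d) (ρ : Matrix (α × β) (α × β) ℂ) :
    tensorBip ρ (maxEnt d) = ((1 / (d:ℝ) : ℝ) : ℂ) • liftTo ρ := by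
  ext r s
  simp only [tensorBip, maxEnt, liftTo, Matrix.smul_apply, smul_eq_mul]
  by_cases h : r.1.2 = r.2.2 ∧ s.1.2 = s.2.2 <;> simp [h]
  · push_cast
    ring

end Glue

lemma trace_swapM {d : ℕ} : (swapM d).trace = (d : ℂ) := by
  simp only [Matrix.trace, Matrix.diag, swapM, Fintype.sum_prod_type]
  have : ∀ m n : Fin d, ((if m = n ∧ n = m then (1:ℂ) else 0)) = if m = n then 1 else 0 := by
    intro m n
    by_cases h : m = n <;> simp [h]
  simp [this, Finset.sum_ite_eq]

lemma trace_one_pair {d : ℕ} :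
    (1 : Matrix (Fin d × Fin d) (Fin d × Fin d) ℂ).trace = ((d : ℂ))^2 := by
  rw [Matrix.trace_one]
  simp [sq]

lemma trace_projP {d : ℕ} : (projP d).trace = (1/2 : ℂ) * ((d:ℂ)^2 + (d:ℂ)) := by
  rw [projP, Matrix.trace_smul, Matrix.trace_add, trace_one_pair, trace_swapM]
  simp

lemma trace_projM {d : ℕ} : (projM d).trace = (1/2 : ℂ) * ((d:ℂ)^2 - (d:ℂ)) := by
  rw [projM, Matrix.trace_smul, Matrix.trace_sub, trace_one_pair, trace_swapM]
  simp

/-! ### Main theorem -/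

/-- Maximally entangled states cannot catalyze p.p.t. distillation fidelity:
`F_Γ(ρ ⊗ Φ(d); dK) = F_Γ(ρ;K)`. -/
theorem FGamma_no_catalysis {a b : ℕ}
    (ρ : Matrix (Fin a × Fin b) (Fin a × Fin b) ℂ)
    (hρ : ρ.PosSemidef) (hρtr : ρ.trace = 1)
    (d : ℕ) (hd : 1 ≤ d) (K : ℝ) (hK : 0 < K) :
    FGamma (tensorBip ρ (maxEnt d)) ((d : ℝ) * K) = FGamma ρ K := by
  have hdC : (d:ℂ) ≠ 0 := Nat.cast_ne_zero.2 (by omega)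
  have hKC : (K:ℂ) ≠ 0 := by exact_mod_cast hK.ne'
  have hinv : ((1/(d:ℝ) : ℝ) : ℂ) = ((d:ℂ))⁻¹ := by push_cast; rw [one_div]
  have hc2 : ((1/((d:ℝ)*K) : ℝ) : ℂ) = ((d:ℂ))⁻¹ * ((1/K : ℝ):ℂ) := by
    push_cast; field_simp
  have hinvnn : (0:ℝ) ≤ 1/(d:ℝ) := by positivity
  unfold FGamma
  congr 1
  ext x
  simp only [Set.mem_setOf_eq]
  constructor
  · -- from the catalyzed problem to the original one
    rintro ⟨F', hF0, hF1, hF2, hF3, hx⟩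
    refine ⟨((1/(d:ℝ) : ℝ) : ℂ) • compress (diagE (Fin d)) F', ?_, ?_, ?_, ?_, ?_⟩
    · exact smul_posSemidef (compress_posSemidef diagE_posSemidef hF0) hinvnn
    · have key : (1 : Matrix (Fin a × Fin b) (Fin a × Fin b) ℂ)
          - ((1/(d:ℝ) : ℝ) : ℂ) • compress (diagE (Fin d)) F'
          = ((1/(d:ℝ) : ℝ) : ℂ) • compress (diagE (Fin d)) (1 - F') := by
        rw [compress_sub_right, compress_one, diagE_trace]
        have hcard : ((Fintype.card (Fin d) : ℂ)) = (d:ℂ) := by simp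
        rw [hcard, smul_sub, smul_smul, hinv, inv_mul_cancel₀ hdC, one_smul]
      rw [key]
      exact smul_posSemidef (compress_posSemidef diagE_posSemidef hF1) hinvnn
    · have hdec : ((1 / K : ℝ) : ℂ) • (1 : Matrix (Fin a × Fin b) (Fin a × Fin b) ℂ)
          - ptrans (((1/(d:ℝ) : ℝ) : ℂ) • compress (diagE (Fin d)) F')
          = ((1/(d:ℝ) : ℝ) : ℂ) • (compress (projP d) (((1 / ((d:ℝ) * K) : ℝ) : ℂ) • 1 - ptrans F')
            + compress (projM d) (ptrans F' + ((1 / ((d:ℝ) * K) : ℝ) : ℂ) • 1)) := by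
        rw [ptrans_smul, ptrans_compress_diagE]
        rw [compress_sub_right, compress_add_right, compress_smul_right, compress_smul_right,
          compress_one, compress_one, trace_projP, trace_projM]
        have hsw : compress (swapM d) (ptrans F')
            = compress (projP d) (ptrans F') - compress (projM d) (ptrans F') := by
          rw [← compress_sub_left, projP_sub_projM]
        rw [hsw, hinv, hc2]
        match_scalars <;> field_simp <;> ring
      rw [hdec]
      exact smul_posSemidef (Matrix.PosSemidef.add
        (compress_posSemidef projP_posSemidef hF2)
        (compress_posSemidef projM_posSemidef hF3)) hinvnn
    · have hdec : ptrans (((1/(d:ℝ) : ℝ) : ℂ) • compress (diagE (Fin d)) F')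
          + ((1 / K : ℝ) : ℂ) • (1 : Matrix (Fin a × Fin b) (Fin a × Fin b) ℂ)
          = ((1/(d:ℝ) : ℝ) : ℂ) • (compress (projM d) (((1 / ((d:ℝ) * K) : ℝ) : ℂ) • 1 - ptrans F')
            + compress (projP d) (ptrans F' + ((1 / ((d:ℝ) * K) : ℝ) : ℂ) • 1)) := by
        rw [ptrans_smul, ptrans_compress_diagE]
        rw [compress_sub_right, compress_add_right, compress_smul_right, compress_smul_right,
          compress_one, compress_one, trace_projP, trace_projM]
        have hsw : compress (swapM d) (ptrans F')
            = compress (projP d) (ptrans F') - compress (projM d) (ptrans F') := by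
          rw [← compress_sub_left, projP_sub_projM]
        rw [hsw, hinv, hc2]
        match_scalars <;> field_simp <;> ring
      rw [hdec]
      exact smul_posSemidef (Matrix.PosSemidef.add
        (compress_posSemidef projM_posSemidef hF2)
        (compress_posSemidef projP_posSemidef hF3)) hinvnn
    · have htr : ((((1/(d:ℝ) : ℝ) : ℂ) • compress (diagE (Fin d)) F') * ρ).trace
          = (F' * tensorBip ρ (maxEnt d)).trace := by
        rw [Matrix.smul_mul, Matrix.trace_smul, trace_compress_mul,
          tensorBip_maxEnt_lift hd ρ, Matrix.mul_smul, Matrix.trace_smul]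
      rw [hx, htr]
  · -- from the original problem to the catalyzed one
    rintro ⟨F, hF0, hF1, hF2, hF3, hx⟩
    refine ⟨tensorBip F (maxEnt d), ?_, ?_, ?_, ?_, ?_⟩
    · exact tensorBip_posSemidef hF0 (maxEnt_posSemidef hd)
    · have key : (1 : Matrix ((Fin a × Fin d) × (Fin b × Fin d)) ((Fin a × Fin d) × (Fin b × Fin d)) ℂ)
          - tensorBip F (maxEnt d)
          = tensorBip (1 - F) (maxEnt d) + tensorBip 1 (1 - maxEnt d) := by
        rw [tensorBip_sub_left, tensorBip_sub_right, tensorBip_one]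
        abel
      rw [key]
      exact Matrix.PosSemidef.add (tensorBip_posSemidef hF1 (maxEnt_posSemidef hd))
        (tensorBip_posSemidef Matrix.PosSemidef.one (one_sub_maxEnt_posSemidef hd))
    · have h1 : (1 : Matrix ((Fin a × Fin d) × (Fin b × Fin d)) ((Fin a × Fin d) × (Fin b × Fin d)) ℂ)
          = tensorBip 1 (projP d) + tensorBip 1 (projM d) := by
        rw [← tensorBip_add_right, projP_add_projM, tensorBip_one]
      have h2 : tensorBip (ptrans F) (swapM d)
          = tensorBip (ptrans F) (projP d) - tensorBip (ptrans F) (projM d) := by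
        rw [← tensorBip_sub_right, projP_sub_projM]
      have hdec : ((1 / ((d:ℝ) * K) : ℝ) : ℂ)
            • (1 : Matrix ((Fin a × Fin d) × (Fin b × Fin d)) ((Fin a × Fin d) × (Fin b × Fin d)) ℂ)
          - ptrans (tensorBip F (maxEnt d))
          = ((1/(d:ℝ) : ℝ) : ℂ) • (tensorBip (((1 / K : ℝ) : ℂ) • 1 - ptrans F) (projP d)
            + tensorBip (ptrans F + ((1 / K : ℝ) : ℂ) • 1) (projM d)) := by
        rw [ptrans_tensorBip, ptrans_maxEnt hd, tensorBip_smul_right, h2,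
          tensorBip_sub_left, tensorBip_add_left, tensorBip_smul_left, tensorBip_smul_left,
          hinv, hc2]
        conv_lhs => rw [h1]
        match_scalars <;> ring
      rw [hdec]
      exact smul_posSemidef (Matrix.PosSemidef.add
        (tensorBip_posSemidef hF2 projP_posSemidef)
        (tensorBip_posSemidef hF3 projM_posSemidef)) hinvnn
    · have h1 : (1 : Matrix ((Fin a × Fin d) × (Fin b × Fin d)) ((Fin a × Fin d) × (Fin b × Fin d)) ℂ)
          = tensorBip 1 (projP d) + tensorBip 1 (projM d) := by
        rw [← tensorBip_add_right, projP_add_projM, tensorBip_one]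
      have h2 : tensorBip (ptrans F) (swapM d)
          = tensorBip (ptrans F) (projP d) - tensorBip (ptrans F) (projM d) := by
        rw [← tensorBip_sub_right, projP_sub_projM]
      have hdec : ptrans (tensorBip F (maxEnt d)) + ((1 / ((d:ℝ) * K) : ℝ) : ℂ)
            • (1 : Matrix ((Fin a × Fin d) × (Fin b × Fin d)) ((Fin a × Fin d) × (Fin b × Fin d)) ℂ)
          = ((1/(d:ℝ) : ℝ) : ℂ) • (tensorBip (((1 / K : ℝ) : ℂ) • 1 - ptrans F) (projM d)
            + tensorBip (ptrans F + ((1 / K : ℝ) : ℂ) • 1) (projP d)) := by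
        rw [ptrans_tensorBip, ptrans_maxEnt hd, tensorBip_smul_right, h2,
          tensorBip_sub_left, tensorBip_add_left, tensorBip_smul_left, tensorBip_smul_left,
          hinv, hc2]
        conv_lhs => rw [h1]
        match_scalars <;> ring
      rw [hdec]
      exact smul_posSemidef (Matrix.PosSemidef.add
        (tensorBip_posSemidef hF2 projM_posSemidef)
        (tensorBip_posSemidef hF3 projP_posSemidef)) hinvnn
    · have htr : (tensorBip F (maxEnt d) * tensorBip ρ (maxEnt d)).trace = (F * ρ).trace := by
        rw [tensorBip_mul, tensorBip_trace, maxEnt_mul_self hd, maxEnt_trace hd, mul_one]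
      rw [hx, htr]
end
end

section
/- For any real K > 0 and any state ρ on a bipartite system, min(1, 1/K) ≤ F_Γ(ρ;K) ≤ min(1, Tr|ρ^Γ|/K). -/
open Matrix Filter
open scoped ComplexOrder

noncomputable section

/-- Trace of the positive part of a Hermitian matrix: `Tr(A₊) = ∑ᵢ max(λᵢ, 0)`. -/
def tracePos {n : Type*} [Fintype n] [DecidableEq n] (A : Matrix n n ℂ) : ℝ :=
  if h : A.IsHermitian then ∑ i, max (h.eigenvalues i) 0 else 0

/-- Trace norm of a Hermitian matrix: `Tr|A| = ∑ᵢ |λᵢ|`. -/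
def traceAbs {n : Type*} [Fintype n] [DecidableEq n] (A : Matrix n n ℂ) : ℝ :=
  if h : A.IsHermitian then ∑ i, |h.eigenvalues i| else 0

/-!
The lower bound is witnessed by the scalar operator `F = min(1, 1/K) • 1`. For the upper bound,
`F ≤ 1` gives `Tr(Fρ) ≤ Tr ρ = 1`; and since the partial transpose preserves the pairing
`Tr(AB)`, `Tr(Fρ) = Tr(F^Γ ρ^Γ)`. Splitting `ρ^Γ = P - N` into positive and negative parts,
`-1/K ≤ F^Γ ≤ 1/K` bounds this by `(Tr P + Tr N)/K = Tr|ρ^Γ|/K`.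
-/

open scoped MatrixOrder

section
variable {n 𝕜 : Type*} [Fintype n] [RCLike 𝕜]

lemma Matrix.PosSemidef.re_trace_mul_nonneg {A B : Matrix n n 𝕜} (hA : A.PosSemidef)
    (hB : B.PosSemidef) : 0 ≤ RCLike.re (A * B).trace := by
  classical
  obtain ⟨X, rfl⟩ := CStarAlgebra.nonneg_iff_eq_star_mul_self.mp hA.nonneg
  have hXBX : (X * B * Xᴴ).PosSemidef := hB.mul_mul_conjTranspose_same X
  rw [mul_assoc, trace_mul_comm, mul_assoc, star_eq_conjTranspose, ← mul_assoc]
  exact (RCLike.nonneg_iff.mp hXBX.trace_nonneg).1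

lemma Matrix.re_trace_mul_le_of_posSemidef_sub {A B P : Matrix n n 𝕜} (hAB : (B - A).PosSemidef)
    (hP : P.PosSemidef) : RCLike.re (A * P).trace ≤ RCLike.re (B * P).trace := by
  have h := hAB.re_trace_mul_nonneg hP
  rwa [sub_mul, trace_sub, map_sub, sub_nonneg] at h

lemma Matrix.re_trace_mul_le_one {F ρ : Matrix n n 𝕜} [DecidableEq n] (hF : (1 - F).PosSemidef)
    (hρ : ρ.PosSemidef) (hρtr : ρ.trace = 1) : RCLike.re (F * ρ).trace ≤ 1 := by
  simpa [hρtr] using re_trace_mul_le_of_posSemidef_sub hF hρ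

end

lemma posSemidef_ofReal_smul_one {n : Type*} [DecidableEq n] {r : ℝ} (hr : 0 ≤ r) :
    ((r : ℂ) • (1 : Matrix n n ℂ)).PosSemidef :=
  PosSemidef.one.smul (Complex.zero_le_real.mpr hr)

section
variable {n : Type*} [Fintype n] [DecidableEq n]

lemma traceAbs_nonneg (A : Matrix n n ℂ) : 0 ≤ traceAbs A := by
  unfold traceAbs
  split_ifs <;> positivity

lemma Matrix.IsHermitian.exists_posSemidef_sub_trace_add_eq_traceAbs {A : Matrix n n ℂ}
    (hA : A.IsHermitian) :
    ∃ P N : Matrix n n ℂ, P.PosSemidef ∧ N.PosSemidef ∧ A = P - N ∧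
      (P + N).trace = traceAbs A := by
  let U : Matrix n n ℂ := hA.eigenvectorUnitary
  let conj (d : n → ℝ) : Matrix n n ℂ := U * diagonal (fun i => (d i : ℂ)) * star U
  have conj_posSemidef (d : n → ℝ) (hd : 0 ≤ d) : (conj d).PosSemidef := by
    simpa [conj, star_eq_conjTranspose] using
      (posSemidef_diagonal_iff.mpr fun i =>
        Complex.zero_le_real.mpr (hd i)).mul_mul_conjTranspose_same U
  have conj_add (d e : n → ℝ) : conj (d + e) = conj d + conj e := by
    simp [conj, ← diagonal_add, mul_add, add_mul]
  have trace_conj (d : n → ℝ) : (conj d).trace = ∑ i, (d i : ℂ) := by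
    rw [trace_mul_cycle, mem_unitaryGroup_iff'.mp hA.eigenvectorUnitary.2, one_mul, trace_diagonal]
  refine ⟨conj fun i => max (hA.eigenvalues i) 0, conj fun i => max (-hA.eigenvalues i) 0,
    conj_posSemidef _ fun _ => le_max_right _ _, conj_posSemidef _ fun _ => le_max_right _ _,
    ?_, ?_⟩
  · have hA_eq : A = conj hA.eigenvalues := by
      conv_lhs => rw [hA.spectral_theorem, Unitary.conjStarAlgAut_apply]
      rfl
    refine hA_eq.trans ?_
    rw [eq_sub_iff_add_eq, ← conj_add]
    congr 1
    ext i
    simp only [Pi.add_apply]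
    linarith [max_zero_sub_max_neg_zero_eq_self (hA.eigenvalues i)]
  · rw [← conj_add, trace_conj, traceAbs, dif_pos hA]
    push_cast
    simp [max_zero_add_max_neg_zero_eq_abs_self]

lemma re_trace_mul_le_mul_traceAbs {G σ : Matrix n n ℂ} {c : ℝ} (hσ : σ.IsHermitian)
    (hG_le : ((c : ℂ) • 1 - G).PosSemidef) (hG_ge : (G + (c : ℂ) • 1).PosSemidef) :
    (G * σ).trace.re ≤ c * traceAbs σ := by
  obtain ⟨P, N, hP, hN, rfl, hPN⟩ := hσ.exists_posSemidef_sub_trace_add_eq_traceAbs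
  have hGP : (G * P).trace.re ≤ ((c : ℂ) • 1 * P).trace.re :=
    re_trace_mul_le_of_posSemidef_sub hG_le hP
  have hGN : ((-(c : ℂ)) • 1 * N).trace.re ≤ (G * N).trace.re :=
    re_trace_mul_le_of_posSemidef_sub (by rwa [neg_smul, sub_neg_eq_add]) hN
  have hc : c * traceAbs (P - N) = ((c : ℂ) • 1 * P).trace.re - ((-(c : ℂ)) • 1 * N).trace.re := by
    rw [← Complex.ofReal_re (traceAbs _), ← hPN]
    simp only [smul_mul_assoc, one_mul, trace_smul, trace_add, smul_eq_mul, neg_mul,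
      Complex.mul_re, Complex.ofReal_re, Complex.ofReal_im, Complex.add_re, Complex.neg_re]
    ring
  rw [hc, mul_sub, trace_sub, Complex.sub_re]
  linarith

end

section
variable {ι κ : Type*}

lemma ptrans_one [DecidableEq ι] [DecidableEq κ] : ptrans (1 : Matrix (ι × κ) (ι × κ) ℂ) = 1 := by
  ext x y
  simp only [ptrans, one_apply, Prod.ext_iff]
  by_cases h1 : x.1 = y.1 <;> by_cases h2 : x.2 = y.2 <;> simp [h1, h2, eq_comm]

lemma ptrans_smul_s7 (c : ℂ) (M : Matrix (ι × κ) (ι × κ) ℂ) : ptrans (c • M) = c • ptrans M :=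
  rfl

lemma Matrix.IsHermitian.ptrans {M : Matrix (ι × κ) (ι × κ) ℂ} (hM : M.IsHermitian) :
    (ptrans M).IsHermitian := by
  ext x y
  exact hM.apply _ _

lemma trace_ptrans_mul_ptrans [Fintype ι] [Fintype κ] (A B : Matrix (ι × κ) (ι × κ) ℂ) :
    (ptrans A * ptrans B).trace = (A * B).trace := by
  simp only [trace, diag, mul_apply, ← Finset.sum_product', Finset.univ_product_univ]
  exact Fintype.sum_equiv (Function.Involutive.toPerm
    (fun p : (ι × κ) × (ι × κ) => ((p.1.1, p.2.2), (p.2.1, p.1.2))) fun _ => rfl) _ _ fun _ => rfl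

end

section
variable {ι κ : Type*} [Fintype ι] [Fintype κ] [DecidableEq ι] [DecidableEq κ]
  {ρ : Matrix (ι × κ) (ι × κ) ℂ} {K : ℝ}

lemma FGamma_le (hρ : ρ.PosSemidef) (hρtr : ρ.trace = 1) (hK : 0 < K) :
    FGamma ρ K ≤ min 1 (traceAbs (ptrans ρ) / K) := by
  refine Real.sSup_le ?_ (le_min zero_le_one (div_nonneg (traceAbs_nonneg _) hK.le))
  rintro _ ⟨F, -, hF, hFΓ_le, hFΓ_ge, rfl⟩
  refine le_min (re_trace_mul_le_one hF hρ hρtr) ?_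
  rw [← trace_ptrans_mul_ptrans, ← one_div_mul_eq_div]
  exact re_trace_mul_le_mul_traceAbs hρ.isHermitian.ptrans hFΓ_le hFΓ_ge

lemma le_FGamma (hρ : ρ.PosSemidef) (hρtr : ρ.trace = 1) (hK : 0 < K) :
    min 1 (1 / K) ≤ FGamma ρ K := by
  set c := min 1 (1 / K)
  have hc : 0 ≤ c := le_min zero_le_one (by positivity)
  have hc1 : c ≤ 1 := min_le_left _ _
  have hcK : c ≤ 1 / K := min_le_right _ _
  clear_value c
  refine le_csSup ⟨1, ?_⟩
    ⟨(c : ℂ) • (1 : Matrix (ι × κ) (ι × κ) ℂ), posSemidef_ofReal_smul_one hc, ?_, ?_, ?_, ?_⟩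
  · rintro _ ⟨F, -, hF, -, -, rfl⟩
    exact re_trace_mul_le_one hF hρ hρtr
  · simpa [sub_smul] using posSemidef_ofReal_smul_one (sub_nonneg.mpr hc1)
  · rw [ptrans_smul_s7, ptrans_one]
    simpa [sub_smul] using posSemidef_ofReal_smul_one (sub_nonneg.mpr hcK)
  · rw [ptrans_smul_s7, ptrans_one]
    simpa [add_smul] using posSemidef_ofReal_smul_one (add_nonneg hc (one_div_nonneg.mpr hK.le))
  · simp [hρtr]

end

/-- `min(1, 1/K) ≤ F_Γ(ρ;K) ≤ min(1, Tr|ρ^Γ|/K)`. -/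
theorem FGamma_negativity_bounds {a b : ℕ}
    (ρ : Matrix (Fin a × Fin b) (Fin a × Fin b) ℂ)
    (hρ : ρ.PosSemidef) (hρtr : ρ.trace = 1) (K : ℝ) (hK : 0 < K) :
    min 1 (1 / K) ≤ FGamma ρ K ∧ FGamma ρ K ≤ min 1 (traceAbs (ptrans ρ) / K) :=
  ⟨le_FGamma hρ hρtr hK, FGamma_le hρ hρtr hK⟩
end
end

section
/- Let Ψ be a trace-preserving linear map from matrices on one bipartite system to matrices on another, such that both Ψ and the map Ψ^Γ : A ↦ Ψ(A^Γ)^Γ are positive (i.e., send positive semidefinite matrices to positive semidefinite matrices). Then for any state ρ and any real K > 0, F_Γ(Ψ(ρ); K) ≤ F_Γ(ρ; K). -/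
/-! Let `Ψ†` be the adjoint of `Ψ` for the trace pairing, `Tr(Ψ†(F) N) = Tr(F Ψ(N))`. It is
positive because `Ψ` is, and unital because `Ψ` is trace preserving, so it maps `0 ≤ F ≤ 1` into
itself. Since `(Ψ† F)^Γ = (Ψ^Γ)† (F^Γ)`, positivity of `Ψ^Γ` does the same for the constraint
`-1/K ≤ F^Γ ≤ 1/K`. Hence every test `F` for `Ψ(ρ)` yields the test `Ψ† F` for `ρ`, with the same
value `Tr(Ψ†(F) ρ) = Tr(F Ψ(ρ))`. -/

open Matrix Filter
open scoped ComplexOrder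

noncomputable section

namespace Matrix

section Positivity

variable {n : Type*} [Fintype n]

theorem trace_mul_vecMulVec {R : Type*} [CommSemiring R] (M : Matrix n n R) (x y : n → R) :
    (M * vecMulVec x y).trace = y ⬝ᵥ (M *ᵥ x) := by
  rw [mul_vecMulVec, trace_vecMulVec, dotProduct_comm]

/-- Over `ℂ`, `0 ≤ z` forces `z` to be real, and real quadratic forms force `M` to be Hermitian. -/
theorem posSemidef_iff_forall_dotProduct_mulVec_nonneg {M : Matrix n n ℂ} :
    M.PosSemidef ↔ ∀ x, 0 ≤ star x ⬝ᵥ (M *ᵥ x) := by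
  classical
  rw [← isPositive_toEuclideanLin_iff, LinearMap.isPositive_iff_complex]
  refine (EuclideanSpace.equiv n ℂ).forall_congr fun x => ?_
  simp [EuclideanSpace.inner_eq_star_dotProduct, dotProduct_comm _ (star _),
    star_dotProduct (M *ᵥ _), Complex.nonneg_iff, Complex.ext_iff, eq_comm, and_comm]
  rfl

theorem PosSemidef.of_forall_trace_mul_nonneg {M : Matrix n n ℂ}
    (h : ∀ P : Matrix n n ℂ, P.PosSemidef → 0 ≤ (M * P).trace) : M.PosSemidef :=
  posSemidef_iff_forall_dotProduct_mulVec_nonneg.mpr fun x =>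
    trace_mul_vecMulVec M x (star x) ▸ h _ (posSemidef_vecMulVec_self_star x)

open scoped MatrixOrder in
theorem PosSemidef.trace_mul_nonneg {𝕜 : Type*} [RCLike 𝕜] {A B : Matrix n n 𝕜}
    (hA : A.PosSemidef) (hB : B.PosSemidef) : 0 ≤ (A * B).trace := by
  classical
  obtain ⟨C, rfl⟩ := CStarAlgebra.nonneg_iff_eq_star_mul_self.mp hB.nonneg
  rw [star_eq_conjTranspose, ← mul_assoc, trace_mul_cycle]
  exact (hA.mul_mul_conjTranspose_same C).trace_nonneg

end Positivity

section TraceDual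

variable {R n m : Type*} [CommSemiring R] [Fintype n] [DecidableEq n] [Fintype m]

def traceDual (Φ : Matrix n n R →ₗ[R] Matrix m m R) : Matrix m m R →ₗ[R] Matrix n n R where
  toFun F := of fun i j => (F * Φ (single j i 1)).trace
  map_add' F G := by ext; simp [add_mul]
  map_smul' c F := by ext; simp

theorem trace_traceDual_mul (Φ : Matrix n n R →ₗ[R] Matrix m m R) (F : Matrix m m R)
    (N : Matrix n n R) : (traceDual Φ F * N).trace = (F * Φ N).trace := by
  induction N using Matrix.induction_on' with
  | h_zero => simp
  | h_add N N' hN hN' => simp [mul_add, hN, hN']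
  | h_std_basis i j c =>
    have hc : single i j c = c • single i j 1 := by rw [smul_single, smul_eq_mul, mul_one]
    rw [trace_mul_single, hc, map_smul, mul_smul_comm, trace_smul]
    simp [traceDual, mul_comm]

theorem traceDual_one [DecidableEq m] {Φ : Matrix n n R →ₗ[R] Matrix m m R}
    (hΦ : ∀ N, (Φ N).trace = N.trace) : traceDual Φ 1 = 1 :=
  ext_iff_trace_mul_right.mpr fun N => by rw [trace_traceDual_mul, one_mul, one_mul, hΦ]

end TraceDual

theorem PosSemidef.traceDual {n m : Type*} [Fintype n] [DecidableEq n] [Fintype m]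
    {Φ : Matrix n n ℂ →ₗ[ℂ] Matrix m m ℂ} (hΦ : ∀ N, N.PosSemidef → (Φ N).PosSemidef)
    {F : Matrix m m ℂ} (hF : F.PosSemidef) : (traceDual Φ F).PosSemidef :=
  .of_forall_trace_mul_nonneg fun P hP => by
    rw [trace_traceDual_mul]
    exact hF.trace_mul_nonneg (hΦ P hP)

end Matrix

section PartialTranspose

variable {ι κ ι' κ' : Type*}

def ptransLinearEquiv : Matrix (ι × κ) (ι × κ) ℂ ≃ₗ[ℂ] Matrix (ι × κ) (ι × κ) ℂ where
  toFun := ptrans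
  invFun := ptrans
  map_add' _ _ := rfl
  map_smul' _ _ := rfl
  left_inv _ := rfl
  right_inv _ := rfl

@[simp]
theorem ptrans_ptrans (M : Matrix (ι × κ) (ι × κ) ℂ) : ptrans (ptrans M) = M := rfl

@[simp]
theorem ptrans_zero : ptrans (0 : Matrix (ι × κ) (ι × κ) ℂ) = 0 := rfl

def ptransConj (Φ : Matrix (ι × κ) (ι × κ) ℂ →ₗ[ℂ] Matrix (ι' × κ') (ι' × κ') ℂ) :
    Matrix (ι × κ) (ι × κ) ℂ →ₗ[ℂ] Matrix (ι' × κ') (ι' × κ') ℂ :=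
  ptransLinearEquiv.toLinearMap ∘ₗ Φ ∘ₗ ptransLinearEquiv.toLinearMap

@[simp]
theorem ptransConj_apply (Φ : Matrix (ι × κ) (ι × κ) ℂ →ₗ[ℂ] Matrix (ι' × κ') (ι' × κ') ℂ)
    (M : Matrix (ι × κ) (ι × κ) ℂ) : ptransConj Φ M = ptrans (Φ (ptrans M)) := rfl

variable [Fintype ι] [Fintype κ] [Fintype ι'] [Fintype κ']

@[simp]
theorem trace_ptrans (M : Matrix (ι × κ) (ι × κ) ℂ) : (ptrans M).trace = M.trace := rfl

theorem trace_ptrans_mul (A B : Matrix (ι × κ) (ι × κ) ℂ) :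
    (ptrans A * B).trace = (A * ptrans B).trace := by
  simp only [trace, diag, mul_apply, ptrans, ← Finset.sum_product']
  exact Finset.sum_nbij' (fun p => ((p.1.1, p.2.2), (p.2.1, p.1.2)))
    (fun p => ((p.1.1, p.2.2), (p.2.1, p.1.2))) (by simp) (by simp) (by simp) (by simp) (by simp)

variable [DecidableEq ι] [DecidableEq κ]

theorem ptrans_traceDual (Φ : Matrix (ι × κ) (ι × κ) ℂ →ₗ[ℂ] Matrix (ι' × κ') (ι' × κ') ℂ)
    (F : Matrix (ι' × κ') (ι' × κ') ℂ) :
    ptrans (traceDual Φ F) = traceDual (ptransConj Φ) (ptrans F) :=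
  ext_iff_trace_mul_right.mpr fun N => by
    rw [trace_ptrans_mul, trace_traceDual_mul, trace_traceDual_mul, ptransConj_apply,
      ← trace_ptrans_mul, ptrans_ptrans]

end PartialTranspose

section PPTTest

variable {ι κ : Type*} [DecidableEq ι] [DecidableEq κ]

def IsPPTTest (K : ℝ) (F : Matrix (ι × κ) (ι × κ) ℂ) : Prop :=
  F.PosSemidef ∧ (1 - F).PosSemidef ∧
    (((1 / K : ℝ) : ℂ) • 1 - ptrans F).PosSemidef ∧ (ptrans F + ((1 / K : ℝ) : ℂ) • 1).PosSemidef

theorem isPPTTest_zero {K : ℝ} (hK : 0 ≤ K) : IsPPTTest K (0 : Matrix (ι × κ) (ι × κ) ℂ) := by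
  have hc : (((1 / K : ℝ) : ℂ) • (1 : Matrix (ι × κ) (ι × κ) ℂ)).PosSemidef :=
    PosSemidef.one.smul (Complex.zero_le_real.mpr (by positivity))
  exact ⟨.zero, by simpa using PosSemidef.one, by simpa using hc, by simpa using hc⟩

variable [Fintype ι] [Fintype κ]

theorem FGamma_eq_sSup_image (ρ : Matrix (ι × κ) (ι × κ) ℂ) (K : ℝ) :
    FGamma ρ K = sSup ((fun F => (F * ρ).trace.re) '' {F | IsPPTTest K F}) := by
  simp only [FGamma, IsPPTTest, Set.image, Set.mem_ofPred_eq, and_assoc, eq_comm]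

theorem IsPPTTest.re_trace_mul_le {K : ℝ} {F ρ : Matrix (ι × κ) (ι × κ) ℂ} (hF : IsPPTTest K F)
    (hρ : ρ.PosSemidef) : (F * ρ).trace.re ≤ ρ.trace.re := by
  have h := hF.2.1.trace_mul_nonneg hρ
  rw [sub_mul, one_mul, trace_sub, sub_nonneg] at h
  exact (Complex.le_def.mp h).1

theorem IsPPTTest.traceDual {ι' κ' : Type*} [Fintype ι'] [Fintype κ'] [DecidableEq ι']
    [DecidableEq κ'] {K : ℝ}
    {Φ : Matrix (ι × κ) (ι × κ) ℂ →ₗ[ℂ] Matrix (ι' × κ') (ι' × κ') ℂ}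
    (hTP : ∀ M, (Φ M).trace = M.trace) (hpos : ∀ M, M.PosSemidef → (Φ M).PosSemidef)
    (hposΓ : ∀ M, M.PosSemidef → (ptransConj Φ M).PosSemidef)
    {F : Matrix (ι' × κ') (ι' × κ') ℂ} (hF : IsPPTTest K F) : IsPPTTest K (traceDual Φ F) := by
  obtain ⟨hF₀, hF₁, hFΓ₁, hFΓ₀⟩ := hF
  have hTPΓ : ∀ M, (ptransConj Φ M).trace = M.trace := by simp [hTP]
  refine ⟨hF₀.traceDual hpos, ?_, ?_, ?_⟩
  · rw [← traceDual_one hTP, ← map_sub]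
    exact hF₁.traceDual hpos
  · rw [ptrans_traceDual, ← traceDual_one hTPΓ, ← map_smul, ← map_sub]
    exact hFΓ₁.traceDual hposΓ
  · rw [ptrans_traceDual, ← traceDual_one hTPΓ, ← map_smul, ← map_add]
    exact hFΓ₀.traceDual hposΓ

end PPTTest

/-- Monotonicity of `F_Γ` under trace-preserving maps `Ψ` with `Ψ` and `Ψ^Γ` positive. -/
theorem FGamma_monotone {a b c e : ℕ}
    (Ψ : Matrix (Fin a × Fin b) (Fin a × Fin b) ℂ →ₗ[ℂ]
      Matrix (Fin c × Fin e) (Fin c × Fin e) ℂ)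
    (hTP : ∀ M, (Ψ M).trace = M.trace)
    (hpos : ∀ M, M.PosSemidef → (Ψ M).PosSemidef)
    (hposΓ : ∀ M, M.PosSemidef → (ptrans (Ψ (ptrans M))).PosSemidef)
    (ρ : Matrix (Fin a × Fin b) (Fin a × Fin b) ℂ)
    (hρ : ρ.PosSemidef) (hρtr : ρ.trace = 1) (K : ℝ) (hK : 0 < K) :
    FGamma (Ψ ρ) K ≤ FGamma ρ K := by
  rw [FGamma_eq_sSup_image, FGamma_eq_sSup_image]
  refine csSup_le_csSup ⟨1, ?_⟩ ⟨_, 0, isPPTTest_zero hK.le, rfl⟩ ?_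
  · rintro _ ⟨F, hF, rfl⟩
    simpa [hρtr] using hF.re_trace_mul_le hρ
  · rintro _ ⟨F, hF, rfl⟩
    exact ⟨traceDual Ψ F, hF.traceDual hTP hpos hposΓ,
      congrArg Complex.re (trace_traceDual_mul Ψ F ρ)⟩
end
end
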